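/- arXiv:2205.08956 — 6 statements merged into one kernel-verified Lean document; each statement's English description precedes it below -/
import Mathlib

section
/- Suppose there is a viable technical change in sector i, and suppose the new real wage bundle b̄ satisfies Property 1 (0 < Λ̄·b̄ ≤ 1 and p·b̄ > 1 = p·b), Property 2 (Λ̄·b̄ = Λ·b), and Property 3 (0 < p·A_{*i} + L_i − p·Ā_{*i} − L̄_i < L̄_i·(p·b̄ − 1)). Let p̄ ≫ 0 and π̄ > 0 be the new prices of production and uniform rate of profit determined by p̄ = (1+π̄)·p̄·(Ā + b̄L̄) with p̄·b̄ = 1. Then the uniform rate of profit strictly falls: π̄ < π. -/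
/-!
Valued at the old prices `p` and the new wage `p·b̄ > 1`, every sector's unit cost under the new
technique exceeds `p_j / (1 + π)`: in the unchanged sectors because the wage rose, in sector `i` by
Property 3. So `p ≪ (1 + π) · p (Ā + b̄L̄)`, while `p̄ = (1 + π̄) · p̄ (Ā + b̄L̄)` with `p̄ ≫ 0`.
Comparing the two at a sector `j₀` minimising `p̄_j / p_j` (a Collatz–Wielandt argument) gives
`1 + π̄ < 1 + π`.
-/

open Matrix

section PositiveEigenvector

variable {ι : Type*} [Fintype ι] [Nonempty ι]

theorem exists_smul_le_of_pos {p q : ι → ℝ} (hp : ∀ j, 0 < p j) (hq : ∀ j, 0 < q j) :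
    ∃ c > 0, ∃ j₀, c * p j₀ = q j₀ ∧ c • p ≤ q := by
  obtain ⟨j₀, -, hj₀⟩ := Finset.univ.exists_min_image (fun j => q j / p j) Finset.univ_nonempty
  refine ⟨q j₀ / p j₀, div_pos (hq j₀) (hp j₀), j₀, div_mul_cancel₀ _ (hp j₀).ne', fun k => ?_⟩
  simpa only [Pi.smul_apply, smul_eq_mul, le_div_iff₀ (hp k)] using hj₀ k (Finset.mem_univ k)

theorem lt_of_eq_smul_vecMul_of_lt_smul_vecMul {M : Matrix ι ι ℝ} (hM : ∀ j k, 0 ≤ M j k)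
    {p q : ι → ℝ} {s t : ℝ} (hp : ∀ j, 0 < p j) (hq : ∀ j, 0 < q j)
    (hpM : ∀ j, p j < s * (p ᵥ* M) j) (hqM : ∀ j, q j = t * (q ᵥ* M) j) : t < s := by
  obtain ⟨c, hc, j₀, hcj₀, hcpq⟩ := exists_smul_le_of_pos hp hq
  have hcol : 0 ≤ fun k => M k j₀ := fun k => hM k j₀
  have hpM₀ : 0 ≤ (p ᵥ* M) j₀ := dotProduct_nonneg_of_nonneg (fun k => (hp k).le) hcol
  have hcpM : c * (p ᵥ* M) j₀ ≤ (q ᵥ* M) j₀ := by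
    have h := dotProduct_le_dotProduct_of_nonneg_right hcpq hcol
    rwa [smul_dotProduct, smul_eq_mul] at h
  have ht : 0 < t := pos_of_mul_pos_left ((hqM j₀) ▸ hq j₀)
    (dotProduct_nonneg_of_nonneg (fun k => (hq k).le) hcol)
  have key : t * (c * (p ᵥ* M) j₀) < s * (c * (p ᵥ* M) j₀) := by
    calc t * (c * (p ᵥ* M) j₀) ≤ t * (q ᵥ* M) j₀ := mul_le_mul_of_nonneg_left hcpM ht.le
      _ = c * p j₀ := by rw [← hqM, hcj₀]
      _ < c * (s * (p ᵥ* M) j₀) := mul_lt_mul_of_pos_left (hpM j₀) hc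
      _ = s * (c * (p ᵥ* M) j₀) := by ring
  exact lt_of_mul_lt_mul_right key (mul_nonneg hc.le hpM₀)

end PositiveEigenvector

section TechnicalChange

variable {ι : Type*} [Fintype ι]

theorem vecMul_add_vecMulVec_apply (p b L : ι → ℝ) (A : Matrix ι ι ℝ) (j : ι) :
    (p ᵥ* (A + vecMulVec b L)) j = (p ᵥ* A) j + (p ⬝ᵥ b) * L j := by
  rw [vecMul_add, vecMul_vecMulVec, Pi.add_apply, Pi.smul_apply, smul_eq_mul]

theorem unit_cost_lt_of_wage_rise {A Abar : Matrix ι ι ℝ} {L Lbar p : ι → ℝ} {w : ℝ} {i : ι}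
    (hL : ∀ j, 0 < L j) (hAbar_off : ∀ j k, k ≠ i → Abar j k = A j k)
    (hLbar_off : ∀ k, k ≠ i → Lbar k = L k) (hw : 1 < w)
    (hi : (p ᵥ* A) i + L i - (p ᵥ* Abar) i - Lbar i < Lbar i * (w - 1)) (j : ι) :
    (p ᵥ* A) j + L j < (p ᵥ* Abar) j + w * Lbar j := by
  obtain rfl | hj := eq_or_ne j i
  · linarith
  · have hcol : (p ᵥ* Abar) j = (p ᵥ* A) j :=
      congrArg (p ⬝ᵥ ·) (funext fun k => hAbar_off k j hj)
    rw [hcol, hLbar_off j hj]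
    nlinarith [hL j]

end TechnicalChange

theorem profit_rate_falls_constant_exploitation_general
    (n : ℕ) (i : Fin n)
    (A Abar : Matrix (Fin n) (Fin n) ℝ)
    (L Lbar p pbar b bbar : Fin n → ℝ)
    (pi pibar : ℝ)
    -- initial configuration
    (hL : ∀ j, 0 < L j)
    (hp : ∀ j, 0 < p j)
    (hpi : 0 < pi)
    (hprice : ∀ j, p j = (1 + pi) * ((∑ k, p k * A k j) + (∑ k, p k * b k) * L j))
    (hnorm : ∑ k, p k * b k = 1)
    -- technical change in sector i (all other sectors unchanged)
    (hAbar_off : ∀ j k, k ≠ i → Abar j k = A j k)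
    (hLbar_off : ∀ k, k ≠ i → Lbar k = L k)
    (hAbar_nonneg : ∀ j k, 0 ≤ Abar j k)
    (hLbar_pos : ∀ k, 0 < Lbar k)
    -- Property 1: new wage bundle, nonnegative, 0 < Λ̄·b̄ ≤ 1, more expensive at old prices
    (hbbar : ∀ j, 0 ≤ bbar j)
    (hP1c : 1 < ∑ k, p k * bbar k)
    -- Property 3: cost reduction is positive and bounded above
    (hP3b : (∑ k, p k * A k i) + L i - (∑ k, p k * Abar k i) - Lbar i
              < Lbar i * ((∑ k, p k * bbar k) - 1))
    -- new equilibrium prices of production and uniform rate of profit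
    (hpbar : ∀ j, 0 < pbar j)
    (hpricebar : ∀ j, pbar j
        = (1 + pibar) * ((∑ k, pbar k * Abar k j) + (∑ k, pbar k * bbar k) * Lbar j)) :
    pibar < pi := by
  have : Nonempty (Fin n) := ⟨i⟩
  have hM : ∀ j k, 0 ≤ (Abar + vecMulVec bbar Lbar) j k := fun j k =>
    add_nonneg (hAbar_nonneg j k) (mul_nonneg (hbbar j) (hLbar_pos k).le)
  have hold : ∀ j, p j < (1 + pi) * (p ᵥ* (Abar + vecMulVec bbar Lbar)) j := fun j => by
    rw [vecMul_add_vecMulVec_apply, hprice j, hnorm, one_mul]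
    exact mul_lt_mul_of_pos_left (unit_cost_lt_of_wage_rise hL hAbar_off hLbar_off hP1c hP3b j)
      (by linarith)
  have hnew : ∀ j, pbar j = (1 + pibar) * (pbar ᵥ* (Abar + vecMulVec bbar Lbar)) j := fun j => by
    rw [vecMul_add_vecMulVec_apply]
    exact hpricebar j
  linarith [lt_of_eq_smul_vecMul_of_lt_smul_vecMul hM hp hpbar hold hnew]

theorem profit_rate_falls_constant_exploitation
    (n : ℕ) (i : Fin n)
    (A Abar : Matrix (Fin n) (Fin n) ℝ)
    (L Lbar p pbar Lam Lambar b bbar : Fin n → ℝ)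
    (pi pibar : ℝ)
    -- initial configuration
    (hA : ∀ j k, 0 ≤ A j k)
    (hL : ∀ j, 0 < L j)
    (hb : ∀ j, 0 ≤ b j)
    (hp : ∀ j, 0 < p j)
    (hpi : 0 < pi)
    (hprice : ∀ j, p j = (1 + pi) * ((∑ k, p k * A k j) + (∑ k, p k * b k) * L j))
    (hnorm : ∑ k, p k * b k = 1)
    (hLampos : ∀ j, 0 < Lam j)
    (hLam : ∀ j, Lam j = (∑ k, Lam k * A k j) + L j)
    -- technical change in sector i (all other sectors unchanged)
    (hAbar_off : ∀ j k, k ≠ i → Abar j k = A j k)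
    (hLbar_off : ∀ k, k ≠ i → Lbar k = L k)
    (hAbar_nonneg : ∀ j k, 0 ≤ Abar j k)
    (hLbar_pos : ∀ k, 0 < Lbar k)
    -- viability: the new technique reduces unit cost at the old prices
    (hviable : (∑ k, p k * Abar k i) + Lbar i < (∑ k, p k * A k i) + L i)
    -- new labor values
    (hLambarpos : ∀ j, 0 < Lambar j)
    (hLambar : ∀ j, Lambar j = (∑ k, Lambar k * Abar k j) + Lbar j)
    -- Property 1: new wage bundle, nonnegative, 0 < Λ̄·b̄ ≤ 1, more expensive at old prices
    (hbbar : ∀ j, 0 ≤ bbar j)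
    (hP1a : 0 < ∑ k, Lambar k * bbar k)
    (hP1b : ∑ k, Lambar k * bbar k ≤ 1)
    (hP1c : 1 < ∑ k, p k * bbar k)
    -- Property 2: constant rate of exploitation
    (hP2 : ∑ k, Lambar k * bbar k = ∑ k, Lam k * b k)
    -- Property 3: cost reduction is positive and bounded above
    (hP3a : 0 < (∑ k, p k * A k i) + L i - (∑ k, p k * Abar k i) - Lbar i)
    (hP3b : (∑ k, p k * A k i) + L i - (∑ k, p k * Abar k i) - Lbar i
              < Lbar i * ((∑ k, p k * bbar k) - 1))
    -- new equilibrium prices of production and uniform rate of profit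
    (hpbar : ∀ j, 0 < pbar j)
    (hpibar : 0 < pibar)
    (hpricebar : ∀ j, pbar j
        = (1 + pibar) * ((∑ k, pbar k * Abar k j) + (∑ k, pbar k * bbar k) * Lbar j))
    (hnormbar : ∑ k, pbar k * bbar k = 1) :
    pibar < pi :=
  profit_rate_falls_constant_exploitation_general n i A Abar L Lbar p pbar b bbar pi pibar hL hp hpi
    hprice hnorm hAbar_off hLbar_off hAbar_nonneg hLbar_pos hbbar hP1c hP3b hpbar hpricebar
end

section
/- Suppose there is a viable technical change in sector i, let e = (1−Λb)/(Λb) > 0 be the initial rate of exploitation, and let g = (p·A_{*i} + L_i − p·Ā_{*i} − L̄_i)/L̄_i > 0 be the proportional cost reduction. If for some sector j ∈ {1,…,n} one has p_j/λ̄_j > (1+e)(1+g), then there exists a nonnegative wage bundle b̄ with 0 < Λ̄·b̄ ≤ 1 that simultaneously satisfies: p·b̄ > 1 = p·b (Property 1), Λ̄·b̄ = Λ·b (Property 2), and 0 < p·A_{*i} + L_i − p·Ā_{*i} − L̄_i < L̄_i·(p·b̄ − 1) (Property 3). -/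
/-! The bundle b̄ is concentrated on the single good j, scaled so that Λ̄·b̄ = Λ·b. Since
1 + e = 1/(Λ·b), the hypothesis p_j/λ̄_j > (1+e)(1+g) says exactly that p·b̄ > 1 + g, and
Properties 1 and 3 follow because the cost reduction equals g·L̄_i. -/

theorem one_add_lt_mul_div_of_exploitation_lt {K : Type*} [Field K] [LinearOrder K]
    [IsStrictOrderedRing K] {S q g l : K} (hS : 0 < S)
    (h : (1 + (1 - S) / S) * (1 + g) < q / l) : 1 + g < q * (S / l) := by
  have hrate : 1 + (1 - S) / S = S⁻¹ := by field_simp; ring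
  rw [hrate, inv_mul_eq_div, div_lt_iff₀ hS] at h
  rwa [div_mul_eq_mul_div, mul_div_assoc] at h

theorem exists_wage_bundle_constant_exploitation_general
    (n : ℕ) (i : Fin n)
    (A Abar : Matrix (Fin n) (Fin n) ℝ)
    (L Lbar p Lam Lambar b : Fin n → ℝ)
    (e g : ℝ)
    -- value of labor power: 0 < Λ·b ≤ 1
    (hLamb_pos : 0 < ∑ k, Lam k * b k)
    (hLamb_le : ∑ k, Lam k * b k ≤ 1)
    -- the rate of exploitation e = (1 − Λ·b)/(Λ·b) is positive
    (he : e = (1 - ∑ k, Lam k * b k) / (∑ k, Lam k * b k))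
    -- technical change in sector i (all other sectors unchanged)
    (hLbar_pos : ∀ k, 0 < Lbar k)
    -- viability: the new technique reduces unit cost at the old prices
    (hviable : (∑ k, p k * Abar k i) + Lbar i < (∑ k, p k * A k i) + L i)
    -- new labor values
    (hLambarpos : ∀ j, 0 < Lambar j)
    -- the proportional cost reduction g > 0
    (hg : g = ((∑ k, p k * A k i) + L i - (∑ k, p k * Abar k i) - Lbar i) / Lbar i)
    (hg_pos : 0 < g)
    -- key condition: for some sector j, p_j/λ̄_j > (1+e)(1+g)
    (hkey : ∃ j, (1 + e) * (1 + g) < p j / Lambar j) :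
    ∃ bbar : Fin n → ℝ,
      (∀ j, 0 ≤ bbar j) ∧
      (0 < ∑ k, Lambar k * bbar k) ∧
      (∑ k, Lambar k * bbar k ≤ 1) ∧
      -- Property 1: p·b̄ > 1 = p·b
      (1 < ∑ k, p k * bbar k) ∧
      -- Property 2: Λ̄·b̄ = Λ·b (constant rate of exploitation)
      (∑ k, Lambar k * bbar k = ∑ k, Lam k * b k) ∧
      -- Property 3: 0 < cost reduction < L̄_i·(p·b̄ − 1)
      (0 < (∑ k, p k * A k i) + L i - (∑ k, p k * Abar k i) - Lbar i) ∧
      ((∑ k, p k * A k i) + L i - (∑ k, p k * Abar k i) - Lbar i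
          < Lbar i * ((∑ k, p k * bbar k) - 1)) := by
  obtain ⟨j, hj⟩ := hkey
  set S := ∑ k, Lam k * b k
  set bbar : Fin n → ℝ := Pi.single j (S / Lambar j)
  have hLambar_j := hLambarpos j
  have hbbar : 0 ≤ bbar := Pi.single_nonneg.2 (div_nonneg hLamb_pos.le hLambar_j.le)
  have hprofit : 1 + g < p j * (S / Lambar j) :=
    one_add_lt_mul_div_of_exploitation_lt hLamb_pos (he ▸ hj)
  have hvalue : ∑ k, Lambar k * bbar k = S := by
    rw [← dotProduct, dotProduct_single, mul_div_cancel₀ _ hLambar_j.ne']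
  have hprice : ∑ k, p k * bbar k = p j * (S / Lambar j) := dotProduct_single p _ j
  have hcost : (∑ k, p k * A k i) + L i - (∑ k, p k * Abar k i) - Lbar i = g * Lbar i := by
    rw [hg, div_mul_cancel₀ _ (hLbar_pos i).ne']
  refine ⟨bbar, hbbar, hvalue ▸ hLamb_pos, hvalue ▸ hLamb_le,
    by linarith, hvalue, by linarith, ?_⟩
  rw [hcost, hprice, mul_comm]
  exact mul_lt_mul_of_pos_left (by linarith) (hLbar_pos i)

theorem exists_wage_bundle_constant_exploitation
    (n : ℕ) (i : Fin n)
    (A Abar : Matrix (Fin n) (Fin n) ℝ)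
    (L Lbar p Lam Lambar b : Fin n → ℝ)
    (pi e g : ℝ)
    -- initial configuration
    (hA : ∀ j k, 0 ≤ A j k)
    (hL : ∀ j, 0 < L j)
    (hb : ∀ j, 0 ≤ b j)
    (hp : ∀ j, 0 < p j)
    (hpi : 0 < pi)
    (hprice : ∀ j, p j = (1 + pi) * ((∑ k, p k * A k j) + (∑ k, p k * b k) * L j))
    (hnorm : ∑ k, p k * b k = 1)
    (hLampos : ∀ j, 0 < Lam j)
    (hLam : ∀ j, Lam j = (∑ k, Lam k * A k j) + L j)
    -- value of labor power: 0 < Λ·b ≤ 1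
    (hLamb_pos : 0 < ∑ k, Lam k * b k)
    (hLamb_le : ∑ k, Lam k * b k ≤ 1)
    -- the rate of exploitation e = (1 − Λ·b)/(Λ·b) is positive
    (he : e = (1 - ∑ k, Lam k * b k) / (∑ k, Lam k * b k))
    (he_pos : 0 < e)
    -- technical change in sector i (all other sectors unchanged)
    (hAbar_off : ∀ j k, k ≠ i → Abar j k = A j k)
    (hLbar_off : ∀ k, k ≠ i → Lbar k = L k)
    (hAbar_nonneg : ∀ j k, 0 ≤ Abar j k)
    (hLbar_pos : ∀ k, 0 < Lbar k)
    -- viability: the new technique reduces unit cost at the old prices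
    (hviable : (∑ k, p k * Abar k i) + Lbar i < (∑ k, p k * A k i) + L i)
    -- new labor values
    (hLambarpos : ∀ j, 0 < Lambar j)
    (hLambar : ∀ j, Lambar j = (∑ k, Lambar k * Abar k j) + Lbar j)
    -- the proportional cost reduction g > 0
    (hg : g = ((∑ k, p k * A k i) + L i - (∑ k, p k * Abar k i) - Lbar i) / Lbar i)
    (hg_pos : 0 < g)
    -- key condition: for some sector j, p_j/λ̄_j > (1+e)(1+g)
    (hkey : ∃ j, (1 + e) * (1 + g) < p j / Lambar j) :
    ∃ bbar : Fin n → ℝ,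
      (∀ j, 0 ≤ bbar j) ∧
      (0 < ∑ k, Lambar k * bbar k) ∧
      (∑ k, Lambar k * bbar k ≤ 1) ∧
      -- Property 1: p·b̄ > 1 = p·b
      (1 < ∑ k, p k * bbar k) ∧
      -- Property 2: Λ̄·b̄ = Λ·b (constant rate of exploitation)
      (∑ k, Lambar k * bbar k = ∑ k, Lam k * b k) ∧
      -- Property 3: 0 < cost reduction < L̄_i·(p·b̄ − 1)
      (0 < (∑ k, p k * A k i) + L i - (∑ k, p k * Abar k i) - Lbar i) ∧
      ((∑ k, p k * A k i) + L i - (∑ k, p k * Abar k i) - Lbar i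
          < Lbar i * ((∑ k, p k * bbar k) - 1)) :=
  exists_wage_bundle_constant_exploitation_general n i A Abar L Lbar p Lam Lambar b e g hLamb_pos
    hLamb_le he hLbar_pos hviable hLambarpos hg hg_pos hkey
end

section
/- Let A be any nonnegative, productive, indecomposable n×n input-output matrix, L any strictly positive 1×n direct labor input vector, and let the real wage bundle b satisfy 0 < Λb ≤ 1 and 1/(Λb) < max_k (p_k/λ_k). Then for any sector i there exist a new column Ā_{*i} and a new labor coefficient L̄_i (all other sectors' techniques unchanged) such that: (a) the new technique is CU-LS, i.e. ā_{ji} > a_{ji} for all j and L̄_i < L_i; (b) the new technique is viable, i.e. p·A_{*i} + L_i > p·Ā_{*i} + L̄_i; and (c) for some sector j, p_j/λ̄_j > (1+e)(1+g), where g = (p·A_{*i} + L_i − p·Ā_{*i} − L̄_i)/L̄_i and Λ̄ = L̄(I−Ā)^{−1} is the new vector of labor values. -/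
/-!
Let `j₀` attain `max_k p_k/λ_k =: M`, so that `M·Λb > 1`. Raising every input of sector `i` by a
common `δ > 0` while cutting its labour input from `L_i` to `ℓ` is CU-LS, and viable as soon as
`δ·∑ p_k < L_i − ℓ`. Taking `ℓ` close to `L_i` makes the cost-saving rate `g` as small as we like,
in particular `1 + g < M·Λb`. Since `1 + e = 1/Λb` and labour values can only fall
(Roemer's Theorem 4.9), `(1 + e)(1 + g) < M ≤ p_{j₀}/λ̄_{j₀}`.
-/

open Finset Matrix

structure IsViableCULSChange {n : ℕ} (p : Fin n → ℝ) (A : Matrix (Fin n) (Fin n) ℝ)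
    (L : Fin n → ℝ) (i : Fin n) (Abar : Matrix (Fin n) (Fin n) ℝ) (Lbar : Fin n → ℝ) : Prop where
  col_eq : ∀ j k, k ≠ i → Abar j k = A j k
  labor_eq : ∀ k, k ≠ i → Lbar k = L k
  input_lt : ∀ j, A j i < Abar j i
  labor_pos : 0 < Lbar i
  labor_lt : Lbar i < L i
  viable : ∑ k, p k * Abar k i + Lbar i < ∑ k, p k * A k i + L i

theorem exists_isViableCULSChange_saving_rate_lt {n : ℕ} {p : Fin n → ℝ}
    (A : Matrix (Fin n) (Fin n) ℝ) {L : Fin n → ℝ} {i : Fin n} (hP : 0 < ∑ k, p k)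
    (hLi : 0 < L i) {η : ℝ} (hη : 0 < η) :
    ∃ Abar Lbar, IsViableCULSChange p A L i Abar Lbar ∧
      (∑ k, p k * A k i + L i - ∑ k, p k * Abar k i - Lbar i) / Lbar i < η := by
  set ℓ := L i / (1 + η) with hℓ_def
  set δ := (L i - ℓ) / (2 * ∑ k, p k) with hδ_def
  have hℓ : 0 < ℓ := by positivity
  have hℓL : ℓ < L i := div_lt_self hLi (by linarith)
  have hδ : 0 < δ := div_pos (by linarith) (by positivity)
  -- half of the labour saved pays for the extra inputs, the other half is the cost saving
  have hcost : ∑ k, p k * A.updateCol i (fun j => A j i + δ) k i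
      = ∑ k, p k * A k i + (L i - ℓ) / 2 := by
    have hδP : (∑ k, p k) * δ = (L i - ℓ) / 2 := by rw [hδ_def]; field_simp
    simp only [updateCol_self, mul_add, sum_add_distrib, ← sum_mul, hδP]
  refine ⟨A.updateCol i (fun j => A j i + δ), Function.update L i ℓ,
    ⟨fun j k hk => updateCol_ne hk, fun k hk => Function.update_of_ne hk _ _,
      fun j => by simpa using hδ, by simpa using hℓ, by simpa using hℓL,
      by rw [hcost, Function.update_self]; linarith⟩, ?_⟩
  have hsaving : (L i - ℓ) / ℓ = η := by
    rw [hℓ_def]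
    field_simp
    ring
  rw [hcost, Function.update_self]
  calc (∑ k, p k * A k i + L i - (∑ k, p k * A k i + (L i - ℓ) / 2) - ℓ) / ℓ
      = (L i - ℓ) / ℓ / 2 := by ring
    _ < η := by linarith

theorem one_add_exploitation_mul_lt {S M g q : ℝ} (hS : 0 < S) (hg : 1 + g < M * S)
    (hMq : M ≤ q) : (1 + (1 - S) / S) * (1 + g) < q := by
  have h1e : 1 + (1 - S) / S = 1 / S := by field_simp; ring
  rw [h1e, one_div_mul_eq_div, div_lt_iff₀ hS]
  exact hg.trans_le (mul_le_mul_of_nonneg_right hMq hS.le)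

theorem exists_viable_CULS_technical_change_general
    (n : ℕ) (i : Fin n)
    (A : Matrix (Fin n) (Fin n) ℝ)
    (L p Lam b : Fin n → ℝ)
    (e : ℝ)
    (hL : ∀ j, 0 < L j)
    (hp : ∀ j, 0 < p j)
    -- the wage bundle satisfies 0 < Λb ≤ 1
    (hLamb_pos : 0 < ∑ k, Lam k * b k)
    -- the rate of exploitation
    (he : e = (1 - ∑ k, Lam k * b k) / (∑ k, Lam k * b k))
    -- the wage bundle satisfies 1/(Λb) < max_k (p_k/λ_k)
    (hmax : 1 / (∑ k, Lam k * b k)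
        < Finset.univ.sup' ⟨i, Finset.mem_univ i⟩ (fun k => p k / Lam k))
    -- Roemer's Theorem 4.9: a viable CU-LS technical change in sector i weakly
    -- lowers all labor values (may be assumed)
    (hRoemer : ∀ (Abar : Matrix (Fin n) (Fin n) ℝ) (Lbar : Fin n → ℝ),
      (∀ j k, k ≠ i → Abar j k = A j k) →
      (∀ k, k ≠ i → Lbar k = L k) →
      (∀ j, A j i < Abar j i) →
      (0 < Lbar i) → (Lbar i < L i) →
      ((∑ k, p k * Abar k i) + Lbar i < (∑ k, p k * A k i) + L i) →
      ∃ Lambar : Fin n → ℝ,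
        (∀ j, Lambar j = (∑ k, Lambar k * Abar k j) + Lbar j) ∧
        (∀ j, 0 < Lambar j ∧ Lambar j ≤ Lam j)) :
    ∃ (Abar : Matrix (Fin n) (Fin n) ℝ) (Lbar Lambar : Fin n → ℝ),
      -- only sector i's technique changes
      (∀ j k, k ≠ i → Abar j k = A j k) ∧
      (∀ k, k ≠ i → Lbar k = L k) ∧
      -- (a) the new technique is CU-LS
      (∀ j, A j i < Abar j i) ∧
      (0 < Lbar i) ∧ (Lbar i < L i) ∧
      -- (b) the new technique is viable
      ((∑ k, p k * Abar k i) + Lbar i < (∑ k, p k * A k i) + L i) ∧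
      -- Λ̄ is the new vector of labor values
      (∀ j, 0 < Lambar j) ∧
      (∀ j, Lambar j = (∑ k, Lambar k * Abar k j) + Lbar j) ∧
      -- (c) for some sector j, p_j/λ̄_j > (1+e)(1+g)
      (∃ j, (1 + e) * (1 +
          ((∑ k, p k * A k i) + L i - (∑ k, p k * Abar k i) - Lbar i) / Lbar i)
            < p j / Lambar j) := by
  set S := ∑ k, Lam k * b k
  obtain ⟨j₀, -, hj₀⟩ := (lt_sup'_iff _).1 hmax
  have hMS : 1 < p j₀ / Lam j₀ * S := by rwa [div_lt_iff₀ hLamb_pos] at hj₀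
  obtain ⟨Abar, Lbar, hchange, hg⟩ := exists_isViableCULSChange_saving_rate_lt A
    (sum_pos (fun k _ => hp k) ⟨i, mem_univ i⟩) (hL i) (sub_pos.mpr hMS)
  obtain ⟨Lambar, hLambar_eq, hLambar⟩ := hRoemer Abar Lbar hchange.col_eq hchange.labor_eq
    hchange.input_lt hchange.labor_pos hchange.labor_lt hchange.viable
  refine ⟨Abar, Lbar, Lambar, hchange.col_eq, hchange.labor_eq, hchange.input_lt,
    hchange.labor_pos, hchange.labor_lt, hchange.viable, fun j => (hLambar j).1, hLambar_eq,
    j₀, ?_⟩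
  rw [he]
  exact one_add_exploitation_mul_lt hLamb_pos (by linarith)
    (div_le_div_of_nonneg_left (hp j₀).le (hLambar j₀).1 (hLambar j₀).2)

theorem exists_viable_CULS_technical_change
    (n : ℕ) (i : Fin n)
    (A : Matrix (Fin n) (Fin n) ℝ)
    (L p Lam b : Fin n → ℝ)
    (pi e : ℝ)
    -- initial configuration
    (hA : ∀ j k, 0 ≤ A j k)
    (hL : ∀ j, 0 < L j)
    (hb : ∀ j, 0 ≤ b j)
    (hp : ∀ j, 0 < p j)
    (hpi : 0 < pi)
    (hprice : ∀ j, p j = (1 + pi) * ((∑ k, p k * A k j) + (∑ k, p k * b k) * L j))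
    (hnorm : ∑ k, p k * b k = 1)
    (hLampos : ∀ j, 0 < Lam j)
    (hLam : ∀ j, Lam j = (∑ k, Lam k * A k j) + L j)
    -- the wage bundle satisfies 0 < Λb ≤ 1
    (hLamb_pos : 0 < ∑ k, Lam k * b k)
    (hLamb_le : ∑ k, Lam k * b k ≤ 1)
    -- the rate of exploitation
    (he : e = (1 - ∑ k, Lam k * b k) / (∑ k, Lam k * b k))
    -- the wage bundle satisfies 1/(Λb) < max_k (p_k/λ_k)
    (hmax : 1 / (∑ k, Lam k * b k)
        < Finset.univ.sup' ⟨i, Finset.mem_univ i⟩ (fun k => p k / Lam k))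
    -- Roemer's Theorem 4.9: a viable CU-LS technical change in sector i weakly
    -- lowers all labor values (may be assumed)
    (hRoemer : ∀ (Abar : Matrix (Fin n) (Fin n) ℝ) (Lbar : Fin n → ℝ),
      (∀ j k, k ≠ i → Abar j k = A j k) →
      (∀ k, k ≠ i → Lbar k = L k) →
      (∀ j, A j i < Abar j i) →
      (0 < Lbar i) → (Lbar i < L i) →
      ((∑ k, p k * Abar k i) + Lbar i < (∑ k, p k * A k i) + L i) →
      ∃ Lambar : Fin n → ℝ,
        (∀ j, Lambar j = (∑ k, Lambar k * Abar k j) + Lbar j) ∧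
        (∀ j, 0 < Lambar j ∧ Lambar j ≤ Lam j)) :
    ∃ (Abar : Matrix (Fin n) (Fin n) ℝ) (Lbar Lambar : Fin n → ℝ),
      -- only sector i's technique changes
      (∀ j k, k ≠ i → Abar j k = A j k) ∧
      (∀ k, k ≠ i → Lbar k = L k) ∧
      -- (a) the new technique is CU-LS
      (∀ j, A j i < Abar j i) ∧
      (0 < Lbar i) ∧ (Lbar i < L i) ∧
      -- (b) the new technique is viable
      ((∑ k, p k * Abar k i) + Lbar i < (∑ k, p k * A k i) + L i) ∧
      -- Λ̄ is the new vector of labor values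
      (∀ j, 0 < Lambar j) ∧
      (∀ j, Lambar j = (∑ k, Lambar k * Abar k j) + Lbar j) ∧
      -- (c) for some sector j, p_j/λ̄_j > (1+e)(1+g)
      (∃ j, (1 + e) * (1 +
          ((∑ k, p k * A k i) + L i - (∑ k, p k * Abar k i) - Lbar i) / Lbar i)
            < p j / Lambar j) :=
  exists_viable_CULS_technical_change_general n i A L p Lam b e hL hp hLamb_pos he hmax hRoemer
end

section
/- Suppose there is a viable technical change in sector i with proportional cost reduction g = (p·A_{*i} + L_i − p·Ā_{*i} − L̄_i)/L̄_i > 0, and suppose that for some sector j one has p_j/λ̄_j > (1+e)(1+g). Then there exists a nonnegative wage bundle b̄ such that: (a) the rate of exploitation strictly rises, i.e. Λ̄·b̄ < Λ·b; (b) p·b̄ > 1 = p·b; and (c) 0 < p·A_{*i} + L_i − p·Ā_{*i} − L̄_i < L̄_i·(p·b̄ − 1), so that (by Dietzenbacher's profit-rate theorem) the new uniform rate of profit π̄ determined by p̄ = (1+π̄)·p̄·(Ā + b̄L̄), p̄·b̄ = 1, satisfies π̄ < π. -/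
/-!
Take the new wage bundle to be `t` units of the single good `j`, with `t` strictly between
`(1 + g) / p_j` and `Λ·b / λ̄_j`; the key condition says exactly that this interval is nonempty.
Then `λ̄·b̄ < Λ·b`, and at the old prices `p·b̄ > 1 + g`, so after the change every sector's
cost `p·(Ā + b̄L̄)` exceeds `p / (1 + π)`. Comparing with the new prices `p̄` at the sector
maximising `p_k / p̄_k` forces `1 + π̄ < 1 + π`.
-/

open Matrix

section

variable {ι : Type*} [Fintype ι]

theorem Matrix.lt_of_lt_smul_vecMul_of_eq_smul_vecMul {R : Type*} [Field R] [LinearOrder R]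
    [IsStrictOrderedRing R] [Nonempty ι] {M : Matrix ι ι R} (hM : ∀ j k, 0 ≤ M j k)
    {p q : ι → R} (hp : ∀ j, 0 < p j) (hq : ∀ j, 0 < q j) {α β : R}
    (hpM : ∀ j, p j < α * (p ᵥ* M) j) (hqM : ∀ j, q j = β * (q ᵥ* M) j) : β < α := by
  obtain ⟨j, -, hmax⟩ := Finset.exists_max_image Finset.univ (fun k => p k / q k)
    Finset.univ_nonempty
  set c := p j / q j
  have hpc : p ≤ c • q := fun k => (div_le_iff₀ (hq k)).1 (hmax k (Finset.mem_univ k))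
  have hcol : (p ᵥ* M) j ≤ c * (q ᵥ* M) j := by
    rw [← smul_eq_mul, ← Pi.smul_apply, ← smul_vecMul]
    exact dotProduct_le_dotProduct_of_nonneg_right hpc fun k => hM k j
  have hpM_nonneg : 0 ≤ (p ᵥ* M) j := dotProduct_nonneg_of_nonneg (fun k => (hp k).le) (hM · j)
  have hqM_nonneg : 0 ≤ (q ᵥ* M) j := dotProduct_nonneg_of_nonneg (fun k => (hq k).le) (hM · j)
  have hα : 0 < α := pos_of_mul_pos_left ((hp j).trans (hpM j)) hpM_nonneg
  have hβ : 0 < β := pos_of_mul_pos_left (hqM j ▸ hq j) hqM_nonneg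
  have hcq : c * q j = p j := div_mul_cancel₀ _ (hq j).ne'
  refine lt_of_mul_lt_mul_right ?_ (hp j).le
  calc β * p j < β * (α * (p ᵥ* M) j) := mul_lt_mul_of_pos_left (hpM j) hβ
    _ ≤ β * (α * (c * (q ᵥ* M) j)) := by gcongr
    _ = α * (c * (β * (q ᵥ* M) j)) := by ring
    _ = α * p j := by rw [← hqM j, hcq]

theorem profit_rate_lt_of_price_lt_marked_up_cost [Nonempty ι] {A : Matrix ι ι ℝ}
    {b L p pbar : ι → ℝ} {π πbar : ℝ} (hA : ∀ j k, 0 ≤ A j k) (hb : ∀ j, 0 ≤ b j)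
    (hL : ∀ j, 0 ≤ L j) (hp : ∀ j, 0 < p j) (hpbar : ∀ j, 0 < pbar j)
    (hcost : ∀ j, p j < (1 + π) * ((p ᵥ* A) j + (p ⬝ᵥ b) * L j))
    (hprice : ∀ j, pbar j = (1 + πbar) * ((pbar ᵥ* A) j + (pbar ⬝ᵥ b) * L j)) : πbar < π := by
  have hM : ∀ j k, 0 ≤ (A + vecMulVec b L) j k := fun j k =>
    add_nonneg (hA j k) (mul_nonneg (hb j) (hL k))
  have hvecMul (q : ι → ℝ) (j : ι) :
      (q ᵥ* (A + vecMulVec b L)) j = (q ᵥ* A) j + (q ⬝ᵥ b) * L j := by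
    rw [vecMul_add, vecMul_vecMulVec]; rfl
  exact lt_of_add_lt_add_left <| lt_of_lt_smul_vecMul_of_eq_smul_vecMul hM hp hpbar
    (α := 1 + π) (β := 1 + πbar) (fun j => hvecMul p j ▸ hcost j)
    (fun j => hvecMul pbar j ▸ hprice j)

theorem price_lt_marked_up_cost_of_cost_reduction {A Abar : Matrix ι ι ℝ}
    {L Lbar p b bbar : ι → ℝ} {π g : ℝ} {i : ι} (hπ : 0 < 1 + π)
    (hprice : ∀ j, p j = (1 + π) * ((p ᵥ* A) j + (p ⬝ᵥ b) * L j)) (hnorm : p ⬝ᵥ b = 1)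
    (hAbar_off : ∀ j k, k ≠ i → Abar j k = A j k) (hLbar_off : ∀ k, k ≠ i → Lbar k = L k)
    (hLbar : ∀ k, 0 < Lbar k) (hg : 0 ≤ g)
    (hred : (p ᵥ* A) i + L i = (p ᵥ* Abar) i + (1 + g) * Lbar i) (hbbar : 1 + g < p ⬝ᵥ bbar) :
    ∀ j, p j < (1 + π) * ((p ᵥ* Abar) j + (p ⬝ᵥ bbar) * Lbar j) := by
  intro j
  have hcost_old : (p ᵥ* A) j + L j ≤ (p ᵥ* Abar) j + (1 + g) * Lbar j := by
    by_cases hj : j = i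
    · subst hj; exact hred.le
    · have hcol : (p ᵥ* Abar) j = (p ᵥ* A) j :=
        congrArg (p ⬝ᵥ ·) (funext fun k => hAbar_off k j hj)
      rw [hcol, hLbar_off j hj]
      nlinarith [hLbar_off j hj ▸ hLbar j]
  rw [hprice j, hnorm, one_mul]
  refine mul_lt_mul_of_pos_left (hcost_old.trans_lt ?_) hπ
  gcongr
  exact hLbar j

end

theorem exists_wage_bundle_rising_exploitation_falling_profit_general
    (n : ℕ) (i : Fin n)
    (A Abar : Matrix (Fin n) (Fin n) ℝ)
    (L Lbar p Lam Lambar b : Fin n → ℝ)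
    (pi e g : ℝ)
    -- initial configuration
    (hp : ∀ j, 0 < p j)
    (hpi : 0 < pi)
    (hprice : ∀ j, p j = (1 + pi) * ((∑ k, p k * A k j) + (∑ k, p k * b k) * L j))
    (hnorm : ∑ k, p k * b k = 1)
    -- value of labor power and rate of exploitation
    (hLamb_pos : 0 < ∑ k, Lam k * b k)
    (he : e = (1 - ∑ k, Lam k * b k) / (∑ k, Lam k * b k))
    -- technical change in sector i (all other sectors unchanged)
    (hAbar_off : ∀ j k, k ≠ i → Abar j k = A j k)
    (hLbar_off : ∀ k, k ≠ i → Lbar k = L k)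
    (hAbar_nonneg : ∀ j k, 0 ≤ Abar j k)
    (hLbar_pos : ∀ k, 0 < Lbar k)
    -- new labor values
    (hLambarpos : ∀ j, 0 < Lambar j)
    -- the proportional cost reduction g > 0
    (hg : g = ((∑ k, p k * A k i) + L i - (∑ k, p k * Abar k i) - Lbar i) / Lbar i)
    (hg_pos : 0 < g)
    -- key condition: for some sector j, p_j/λ̄_j > (1+e)(1+g)
    (hkey : ∃ j, (1 + e) * (1 + g) < p j / Lambar j) :
    ∃ bbar : Fin n → ℝ,
      (∀ j, 0 ≤ bbar j) ∧
      -- (a) the rate of exploitation strictly rises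
      (∑ k, Lambar k * bbar k < ∑ k, Lam k * b k) ∧
      -- (b) the new wage bundle is more expensive at the old prices
      (1 < ∑ k, p k * bbar k) ∧
      -- (c) the cost reduction is positive and bounded above
      (0 < (∑ k, p k * A k i) + L i - (∑ k, p k * Abar k i) - Lbar i) ∧
      ((∑ k, p k * A k i) + L i - (∑ k, p k * Abar k i) - Lbar i
          < Lbar i * ((∑ k, p k * bbar k) - 1)) ∧
      -- consequently (Dietzenbacher), the new uniform rate of profit falls
      (∀ (pbar : Fin n → ℝ) (pibar : ℝ),
        (∀ j, 0 < pbar j) → 0 < pibar →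
        (∀ j, pbar j
          = (1 + pibar) * ((∑ k, pbar k * Abar k j) + (∑ k, pbar k * bbar k) * Lbar j)) →
        (∑ k, pbar k * bbar k = 1) →
        pibar < pi) := by
  obtain ⟨j, hj⟩ := hkey
  have hgap : (1 + g) / p j < (∑ k, Lam k * b k) / Lambar j := by
    rw [he, lt_div_iff₀ (hLambarpos j)] at hj
    rw [div_lt_div_iff₀ (hp j) (hLambarpos j)]
    field_simp at hj
    linarith
  obtain ⟨t, ht_low, ht_high⟩ := exists_between hgap
  have hpt : 1 + g < p j * t := (div_lt_iff₀' (hp j)).1 ht_low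
  have hΔ : (∑ k, p k * A k i) + L i - (∑ k, p k * Abar k i) - Lbar i = g * Lbar i := by
    rw [hg, div_mul_cancel₀ _ (hLbar_pos i).ne']
  have hpb : p ⬝ᵥ Pi.single j t = p j * t := dotProduct_single ..
  have ht : 0 ≤ t := (div_nonneg (by linarith) (hp j).le).trans ht_low.le
  have hbbar : 0 ≤ Pi.single j t := (Pi.single_nonneg (α := fun _ => ℝ)).2 ht
  refine ⟨Pi.single j t, hbbar, ?_, ?_, ?_, ?_, ?_⟩
  · exact (dotProduct_single ..).trans_lt ((lt_div_iff₀' (hLambarpos j)).1 ht_high)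
  · change 1 < p ⬝ᵥ _; linarith
  · rw [hΔ]; exact mul_pos hg_pos (hLbar_pos i)
  · change _ < Lbar i * (p ⬝ᵥ _ - 1)
    rw [hΔ, hpb, mul_comm]
    exact mul_lt_mul_of_pos_left (by linarith) (hLbar_pos i)
  · intro pbar pibar hpbar _ hpricebar _
    have : Nonempty (Fin n) := ⟨i⟩
    refine profit_rate_lt_of_price_lt_marked_up_cost hAbar_nonneg hbbar
      (fun k => (hLbar_pos k).le) hp hpbar ?_ hpricebar
    exact price_lt_marked_up_cost_of_cost_reduction (by linarith) hprice hnorm hAbar_off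
      hLbar_off hLbar_pos hg_pos.le (by simp only [vecMul, dotProduct]; linarith) (hpb ▸ hpt)

theorem exists_wage_bundle_rising_exploitation_falling_profit
    (n : ℕ) (i : Fin n)
    (A Abar : Matrix (Fin n) (Fin n) ℝ)
    (L Lbar p Lam Lambar b : Fin n → ℝ)
    (pi e g : ℝ)
    -- initial configuration
    (hA : ∀ j k, 0 ≤ A j k)
    (hL : ∀ j, 0 < L j)
    (hb : ∀ j, 0 ≤ b j)
    (hp : ∀ j, 0 < p j)
    (hpi : 0 < pi)
    (hprice : ∀ j, p j = (1 + pi) * ((∑ k, p k * A k j) + (∑ k, p k * b k) * L j))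
    (hnorm : ∑ k, p k * b k = 1)
    (hLampos : ∀ j, 0 < Lam j)
    (hLam : ∀ j, Lam j = (∑ k, Lam k * A k j) + L j)
    -- value of labor power and rate of exploitation
    (hLamb_pos : 0 < ∑ k, Lam k * b k)
    (he : e = (1 - ∑ k, Lam k * b k) / (∑ k, Lam k * b k))
    -- technical change in sector i (all other sectors unchanged)
    (hAbar_off : ∀ j k, k ≠ i → Abar j k = A j k)
    (hLbar_off : ∀ k, k ≠ i → Lbar k = L k)
    (hAbar_nonneg : ∀ j k, 0 ≤ Abar j k)
    (hLbar_pos : ∀ k, 0 < Lbar k)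
    -- viability
    (hviable : (∑ k, p k * Abar k i) + Lbar i < (∑ k, p k * A k i) + L i)
    -- new labor values
    (hLambarpos : ∀ j, 0 < Lambar j)
    (hLambar : ∀ j, Lambar j = (∑ k, Lambar k * Abar k j) + Lbar j)
    -- the proportional cost reduction g > 0
    (hg : g = ((∑ k, p k * A k i) + L i - (∑ k, p k * Abar k i) - Lbar i) / Lbar i)
    (hg_pos : 0 < g)
    -- key condition: for some sector j, p_j/λ̄_j > (1+e)(1+g)
    (hkey : ∃ j, (1 + e) * (1 + g) < p j / Lambar j) :
    ∃ bbar : Fin n → ℝ,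
      (∀ j, 0 ≤ bbar j) ∧
      -- (a) the rate of exploitation strictly rises
      (∑ k, Lambar k * bbar k < ∑ k, Lam k * b k) ∧
      -- (b) the new wage bundle is more expensive at the old prices
      (1 < ∑ k, p k * bbar k) ∧
      -- (c) the cost reduction is positive and bounded above
      (0 < (∑ k, p k * A k i) + L i - (∑ k, p k * Abar k i) - Lbar i) ∧
      ((∑ k, p k * A k i) + L i - (∑ k, p k * Abar k i) - Lbar i
          < Lbar i * ((∑ k, p k * bbar k) - 1)) ∧
      -- consequently (Dietzenbacher), the new uniform rate of profit falls
      (∀ (pbar : Fin n → ℝ) (pibar : ℝ),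
        (∀ j, 0 < pbar j) → 0 < pibar →
        (∀ j, pbar j
          = (1 + pibar) * ((∑ k, pbar k * Abar k j) + (∑ k, pbar k * bbar k) * Lbar j)) →
        (∑ k, pbar k * bbar k = 1) →
        pibar < pi) :=
  exists_wage_bundle_rising_exploitation_falling_profit_general n i A Abar L Lbar p Lam Lambar b pi
    e g hp hpi hprice hnorm hLamb_pos he hAbar_off hLbar_off hAbar_nonneg hLbar_pos hLambarpos hg
    hg_pos hkey
end

section
/- Let A be a nonnegative n×n matrix, L a strictly positive 1×n row vector, and π > 0. Suppose the matrix series Σ_{k≥0} A^k and Σ_{k≥0} (1+π)^k A^k both converge entrywise, with sums (I−A)^{−1} and (I−(1+π)A)^{−1} respectively. Define p = (1+π)·L·(I−(1+π)A)^{−1} and Λ = L·(I−A)^{−1}. Then p ≥ (1+π)·Λ entrywise, and consequently p_j > λ_j for every j = 1,…,n, i.e. each price of production strictly exceeds the corresponding labor value. -/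
/-!
For a nonnegative matrix `A` and `c ≥ 1`, the series `∑ cᵏ Aᵏ` dominates `∑ Aᵏ` term by term,
so `(1 - cA)⁻¹ ≥ (1 - A)⁻¹` entrywise; multiplying by the positive row vector `L` gives
`p ≥ (1 + π) Λ`. Since `(1 - A)⁻¹ = 1 + A + ⋯` is nonnegative with diagonal at least `1`,
every labor value `λⱼ ≥ Lⱼ` is positive, and `(1 + π) λⱼ > λⱼ`.
-/

namespace Matrix

variable {ι R : Type*} [Fintype ι] [Semiring R] [PartialOrder R] {A B C : Matrix ι ι R}

section NeumannSeries

variable [DecidableEq ι] [IsOrderedRing R] [TopologicalSpace R] [OrderClosedTopology R]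

theorem apply_nonneg_of_hasSum_pow (hA : ∀ i j, 0 ≤ A i j)
    (hB : HasSum (fun k : ℕ => A ^ k) B) (i j : ι) : 0 ≤ B i j :=
  hasSum_le (fun k => pow_apply_nonneg hA k i j) hasSum_zero (Pi.hasSum.mp (Pi.hasSum.mp hB i) j)

theorem one_le_apply_self_of_hasSum_pow (hA : ∀ i j, 0 ≤ A i j)
    (hB : HasSum (fun k : ℕ => A ^ k) B) (i : ι) : 1 ≤ B i i := by
  simpa using le_hasSum (Pi.hasSum.mp (Pi.hasSum.mp hB i) i) 0
    (fun k _ => pow_apply_nonneg hA k i i)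

theorem apply_le_apply_of_hasSum_pow_of_hasSum_smul_pow (hA : ∀ i j, 0 ≤ A i j) {c : R}
    (hc : 1 ≤ c) (hB : HasSum (fun k : ℕ => A ^ k) B)
    (hC : HasSum (fun k : ℕ => c ^ k • A ^ k) C) (i j : ι) : B i j ≤ C i j := by
  refine hasSum_le (fun k => ?_) (Pi.hasSum.mp (Pi.hasSum.mp hB i) j)
    (Pi.hasSum.mp (Pi.hasSum.mp hC i) j)
  simpa using le_mul_of_one_le_left (pow_apply_nonneg hA k i j) (one_le_pow₀ hc)

end NeumannSeries

theorem vecMul_le_vecMul_of_apply_le [IsOrderedRing R] {L : ι → R} (hL : 0 ≤ L)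
    (hBC : ∀ i j, B i j ≤ C i j) : B.vecMul L ≤ C.vecMul L :=
  fun j => dotProduct_le_dotProduct_of_nonneg_left (fun i => hBC i j) hL

theorem vecMul_pos_of_apply_self_pos [IsStrictOrderedRing R] {L : ι → R} (hL : ∀ i, 0 < L i)
    (hB : ∀ i j, 0 ≤ B i j) (hBdiag : ∀ i, 0 < B i i) (j : ι) : 0 < B.vecMul L j :=
  (mul_pos (hL j) (hBdiag j)).trans_le <|
    Finset.single_le_sum (f := fun i => L i * B i j)
      (fun i _ => mul_nonneg (hL i).le (hB i j)) (Finset.mem_univ j)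

end Matrix

theorem price_exceeds_value
    (n : ℕ) (A : Matrix (Fin n) (Fin n) ℝ)
    (L p Lam : Fin n → ℝ) (pi : ℝ)
    (hA : ∀ j k, 0 ≤ A j k)
    (hL : ∀ j, 0 < L j)
    (hpi : 0 < pi)
    -- entrywise convergence of the Neumann series to the respective inverses
    (hSum1 : HasSum (fun k : ℕ => A ^ k) (1 - A)⁻¹)
    (hSum2 : HasSum (fun k : ℕ => ((1 + pi) ^ k) • A ^ k) (1 - (1 + pi) • A)⁻¹)
    -- prices of production and labor values
    (hpdef : p = (1 + pi) • ((1 - (1 + pi) • A)⁻¹).vecMul L)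
    (hLamdef : Lam = ((1 - A)⁻¹).vecMul L) :
    (∀ j, (1 + pi) * Lam j ≤ p j) ∧ (∀ j, Lam j < p j) := by
  have hLam_pos : ∀ j, 0 < Lam j := hLamdef ▸ Matrix.vecMul_pos_of_apply_self_pos hL
    (Matrix.apply_nonneg_of_hasSum_pow hA hSum1)
    (fun i => one_pos.trans_le (Matrix.one_le_apply_self_of_hasSum_pow hA hSum1 i))
  have hLam_le : Lam ≤ ((1 - (1 + pi) • A)⁻¹).vecMul L := hLamdef ▸
    Matrix.vecMul_le_vecMul_of_apply_le (fun i => (hL i).le)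
      (Matrix.apply_le_apply_of_hasSum_pow_of_hasSum_smul_pow hA (by linarith) hSum1 hSum2)
  have hmain : ∀ j, (1 + pi) * Lam j ≤ p j := fun j => by
    rw [hpdef, Pi.smul_apply, smul_eq_mul]
    exact mul_le_mul_of_nonneg_left (hLam_le j) (by linarith)
  exact ⟨hmain, fun j => (lt_mul_of_one_lt_left (hLam_pos j) (by linarith)).trans_le (hmain j)⟩
end

section
/- Let p ∈ ℝⁿ be a strictly positive vector, let L_i > 0, let φ > 1, and choose ε with 0 < ε < L_i/(Σ_k p_k). Then the open interval ((L_i − ε·Σ_k p_k)/φ, L_i − ε·Σ_k p_k) is nonempty, and any L̄_i in this interval satisfies L̄_i > 0. Moreover, if Ā_{*i} is obtained from a nonnegative column A_{*i} by adding ε to every entry, then the resulting technique is CU-LS (ā_{ji} = a_{ji} + ε > a_{ji} for all j and L̄_i < L_i), viable (p·Ā_{*i} + L̄_i < p·A_{*i} + L_i), and satisfies the bound (p·A_{*i} + L_i − p·Ā_{*i})/L̄_i < φ. -/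
/-! Put `D = L_i - ε Σ p`; the bound `ε < L_i / Σ p` says exactly `D > 0`. Raising every input
coefficient by `ε` raises the input cost by `ε Σ p`, so the new unit cost is below
`p·A + D + ε Σ p = p·A + L_i`, and after this cancellation the ratio in the bound is `D / L̄_i`,
which is below `φ` precisely when `L̄_i > D / φ`. -/

theorem Finset.sum_mul_add_const {ι R : Type*} [CommSemiring R] (s : Finset ι) (p a : ι → R)
    (c : R) : ∑ k ∈ s, p k * (a k + c) = ∑ k ∈ s, p k * a k + c * ∑ k ∈ s, p k := by
  rw [Finset.mul_sum, ← Finset.sum_add_distrib]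
  exact Finset.sum_congr rfl fun k _ => by ring

theorem pos_of_pos_of_lt_div {K : Type*} [Field K] [LinearOrder K] [IsStrictOrderedRing K]
    {a b c : K} (ha : 0 < a) (hb : 0 < b) (h : a < b / c) : 0 < c :=
  (div_pos_iff_of_pos_left hb).1 (ha.trans h)

theorem construction_of_viable_CULS_technique_general
    (n : ℕ) (p : Fin n → ℝ)
    (Li : ℝ) (hLi : 0 < Li)
    (phi : ℝ) (hphi : 1 < phi)
    (eps : ℝ) (heps : 0 < eps) (heps' : eps < Li / ∑ k, p k)
    (Ai : Fin n → ℝ) :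
    -- the open interval ((L_i − ε·Σp)/φ, L_i − ε·Σp) is nonempty
    ((Li - eps * ∑ k, p k) / phi < Li - eps * ∑ k, p k) ∧
    -- and any L̄_i in it is positive, and the technique (A_{*i} + ε, L̄_i) is
    -- CU-LS, viable, and satisfies the bound
    (∀ Lbari : ℝ,
      (Li - eps * ∑ k, p k) / phi < Lbari → Lbari < Li - eps * ∑ k, p k →
        (0 < Lbari) ∧
        (∀ j, Ai j < Ai j + eps) ∧
        (Lbari < Li) ∧
        ((∑ k, p k * (Ai k + eps)) + Lbari < (∑ k, p k * Ai k) + Li) ∧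
        (((∑ k, p k * Ai k) + Li - (∑ k, p k * (Ai k + eps))) / Lbari < phi)) := by
  set S := ∑ k, p k
  have hS : 0 < S := pos_of_pos_of_lt_div heps hLi heps'
  have hepsS : 0 < eps * S := mul_pos heps hS
  have hD : 0 < Li - eps * S := sub_pos.2 ((lt_div_iff₀ hS).1 heps')
  have hphi0 : 0 < phi := zero_lt_one.trans hphi
  have hcost : ∑ k, p k * (Ai k + eps) = ∑ k, p k * Ai k + eps * S :=
    Finset.sum_mul_add_const _ _ _ _
  refine ⟨div_lt_self hD hphi, fun Lbari hlow hup => ?_⟩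
  have hLbari : 0 < Lbari := (div_pos hD hphi0).trans hlow
  refine ⟨hLbari, fun j => lt_add_of_pos_right _ heps, by linarith, by linarith, ?_⟩
  rw [hcost, show ∑ k, p k * Ai k + Li - (∑ k, p k * Ai k + eps * S) = Li - eps * S by ring]
  exact (div_lt_comm₀ hphi0 hLbari).1 hlow

theorem construction_of_viable_CULS_technique
    (n : ℕ) (p : Fin n → ℝ) (hp : ∀ k, 0 < p k)
    (Li : ℝ) (hLi : 0 < Li)
    (phi : ℝ) (hphi : 1 < phi)
    (eps : ℝ) (heps : 0 < eps) (heps' : eps < Li / ∑ k, p k)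
    (Ai : Fin n → ℝ) (hAi : ∀ j, 0 ≤ Ai j) :
    -- the open interval ((L_i − ε·Σp)/φ, L_i − ε·Σp) is nonempty
    ((Li - eps * ∑ k, p k) / phi < Li - eps * ∑ k, p k) ∧
    -- and any L̄_i in it is positive, and the technique (A_{*i} + ε, L̄_i) is
    -- CU-LS, viable, and satisfies the bound
    (∀ Lbari : ℝ,
      (Li - eps * ∑ k, p k) / phi < Lbari → Lbari < Li - eps * ∑ k, p k →
        (0 < Lbari) ∧
        (∀ j, Ai j < Ai j + eps) ∧
        (Lbari < Li) ∧
        ((∑ k, p k * (Ai k + eps)) + Lbari < (∑ k, p k * Ai k) + Li) ∧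
        (((∑ k, p k * Ai k) + Li - (∑ k, p k * (Ai k + eps))) / Lbari < phi)) :=
  construction_of_viable_CULS_technique_general n p Li hLi phi hphi eps heps heps' Ai
end
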